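/- arXiv:1909.04248 — 8 statements merged into one kernel-verified Lean document; each statement's English description precedes it below -/
import Mathlib

section
/- For every A ≥ 0, a > 0, D ≥ 0 and points x, y, u in a real inner product space E satisfying ‖y − u‖ ≤ D and ‖x − u‖ ≤ D, setting x̃ := (A·y + a·x)/(A + a), one has A·‖y − x̃‖² + a·‖u − x̃‖² = (a/(A + a))·( a·‖u − x‖² + A·‖u − y‖² ) ≤ a·D². -/
/-!
Writing `θ = a / (A + a)`, the point `x̃` is the convex combination `(1 - θ) • y + θ • x`, so
`y - x̃ = θ • (y - x)`, while the parallelogram-type identity for convex combinations gives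
`‖u - x̃‖² = (1 - θ)‖u - y‖² + θ‖u - x‖² - θ(1 - θ)‖y - x‖²`. Since `Aθ = a(1 - θ)`, the two
`‖y - x‖²` terms cancel. The bound is the fact that a weighted average of numbers `≤ D²` is `≤ D²`.
-/

section InnerProductSpace

variable {E : Type*} [NormedAddCommGroup E] [InnerProductSpace ℝ E]

theorem norm_sub_smul_add_smul_sq {s t : ℝ} (hst : s + t = 1) (w p q : E) :
    ‖w - (s • p + t • q)‖ ^ 2
      = s * ‖w - p‖ ^ 2 + t * ‖w - q‖ ^ 2 - s * t * ‖p - q‖ ^ 2 := by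
  obtain rfl : s = 1 - t := eq_sub_of_add_eq hst
  have hw : w - ((1 - t) • p + t • q) = (1 - t) • (w - p) + t • (w - q) := by
    module
  have hpq : p - q = (w - q) - (w - p) := by abel
  rw [hw, hpq, norm_add_sq_real, norm_sub_sq_real (w - q), norm_smul, norm_smul,
    real_inner_smul_left, real_inner_smul_right, real_inner_comm (w - p), Real.norm_eq_abs,
    Real.norm_eq_abs, mul_pow, mul_pow, sq_abs, sq_abs]
  ring

theorem weighted_norm_sub_average_sq {A a : ℝ} (hAa : A + a ≠ 0) (x y u : E) :
    A * ‖y - (A + a)⁻¹ • (A • y + a • x)‖ ^ 2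
        + a * ‖u - (A + a)⁻¹ • (A • y + a • x)‖ ^ 2
      = a / (A + a) * (a * ‖u - x‖ ^ 2 + A * ‖u - y‖ ^ 2) := by
  have hθ : A / (A + a) + a / (A + a) = 1 := by field_simp
  have hx' : (A + a)⁻¹ • (A • y + a • x) = (A / (A + a)) • y + (a / (A + a)) • x := by
    module
  have hyx' : y - (A + a)⁻¹ • (A • y + a • x) = (a / (A + a)) • (y - x) := by
    rw [hx', eq_sub_of_add_eq hθ]
    module
  rw [hyx', norm_smul, mul_pow, Real.norm_eq_abs, sq_abs, hx',
    norm_sub_smul_add_smul_sq hθ]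
  field_simp
  ring

end InnerProductSpace

theorem div_mul_add_le_mul {A a s t M : ℝ} (hA : 0 ≤ A) (ha : 0 < a) (hs : s ≤ M)
    (ht : t ≤ M) : a / (A + a) * (a * s + A * t) ≤ a * M := by
  have hAa : 0 < A + a := by linarith
  have hsum : a * s + A * t ≤ (A + a) * M := by
    linarith [mul_le_mul_of_nonneg_left hs ha.le, mul_le_mul_of_nonneg_left ht hA]
  calc a / (A + a) * (a * s + A * t) ≤ a / (A + a) * ((A + a) * M) := by gcongr
    _ = a * M := by field_simp

theorem stmt0_general {E : Type*} [NormedAddCommGroup E] [InnerProductSpace ℝ E]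
    (A a D : ℝ) (hA : 0 ≤ A) (ha : 0 < a)
    (x y u : E) (hyu : ‖y - u‖ ≤ D) (hxu : ‖x - u‖ ≤ D) :
    A * ‖y - (A + a)⁻¹ • (A • y + a • x)‖ ^ 2
        + a * ‖u - (A + a)⁻¹ • (A • y + a • x)‖ ^ 2
      = a / (A + a) * (a * ‖u - x‖ ^ 2 + A * ‖u - y‖ ^ 2)
    ∧ a / (A + a) * (a * ‖u - x‖ ^ 2 + A * ‖u - y‖ ^ 2) ≤ a * D ^ 2 := by
  refine ⟨weighted_norm_sub_average_sq (by positivity) x y u,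
    div_mul_add_le_mul hA ha ?_ ?_⟩
  · rw [norm_sub_rev] at hxu
    exact pow_le_pow_left₀ (norm_nonneg _) hxu 2
  · rw [norm_sub_rev] at hyu
    exact pow_le_pow_left₀ (norm_nonneg _) hyu 2

/-- Lemma 1(b): for `A ≥ 0`, `a > 0`, `D ≥ 0` and points `x, y, u` with
`‖y − u‖ ≤ D` and `‖x − u‖ ≤ D`, setting `x̃ := (A•y + a•x)/(A + a)`, one has
`A‖y − x̃‖² + a‖u − x̃‖² = (a/(A+a))(a‖u − x‖² + A‖u − y‖²) ≤ a·D²`. -/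
theorem stmt0 {E : Type*} [NormedAddCommGroup E] [InnerProductSpace ℝ E]
    (A a D : ℝ) (hA : 0 ≤ A) (ha : 0 < a) (hD : 0 ≤ D)
    (x y u : E) (hyu : ‖y - u‖ ≤ D) (hxu : ‖x - u‖ ≤ D) :
    A * ‖y - (A + a)⁻¹ • (A • y + a • x)‖ ^ 2
        + a * ‖u - (A + a)⁻¹ • (A • y + a • x)‖ ^ 2
      = a / (A + a) * (a * ‖u - x‖ ^ 2 + A * ‖u - y‖ ^ 2)
    ∧ a / (A + a) * (a * ‖u - x‖ ^ 2 + A * ‖u - y‖ ^ 2) ≤ a * D ^ 2 :=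
  stmt0_general A a D hA ha x y u hyu hxu
end

section
/- Let s be a convex subset of a real inner product space E, let f : E → ℝ be differentiable with gradient ∇f, let h : E → ℝ be convex on s, let M > 0 and x̃ ∈ s, and suppose y ∈ s minimizes the function u ↦ ⟨∇f(x̃), u − x̃⟩ + h(u) + (M/2)·‖u − x̃‖² over s. Define v := M·(x̃ − y) + ∇f(y) − ∇f(x̃). Then: (i) for every u ∈ s, h(u) ≥ h(y) + ⟨v − ∇f(y), u − y⟩ (i.e., v lies in ∇f(y) plus the subdifferential at y of h restricted to s); and (ii) ‖v‖ ≤ M·‖y − x̃‖ + ‖∇f(y) − ∇f(x̃)‖. -/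
open Set
open scoped RealInnerProductSpace

theorem hasFDerivAt_inner_sub_add_norm_sub_sq {E : Type*} [NormedAddCommGroup E]
    [InnerProductSpace ℝ E] (g x₀ : E) (M : ℝ) (y : E) :
    HasFDerivAt (fun u => ⟪g, u - x₀⟫ + M / 2 * ‖u - x₀‖ ^ 2)
      (innerSL ℝ (g + M • (y - x₀))) y := by
  have hshift := (hasFDerivAt_id (𝕜 := ℝ) y).sub_const x₀
  have hsum := ((innerSL ℝ g).hasFDerivAt.comp y hshift).add (hshift.norm_sq.const_mul (M / 2))
  refine hsum.congr_fderiv (ContinuousLinearMap.ext fun v => ?_)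
  simp only [add_apply, ContinuousLinearMap.comp_id, id_eq, coe_innerSL_apply,
    smul_apply, smul_eq_mul, nsmul_eq_mul, inner_add_left, real_inner_smul_left]
  ring

theorem ConvexOn.sub_le_of_isMinOn_add {E : Type*} [NormedAddCommGroup E] [NormedSpace ℝ E]
    {s : Set E} {h q : E → ℝ} {q' : E →L[ℝ] ℝ} {y u : E}
    (hh : ConvexOn ℝ s h) (hq : HasFDerivAt q q' y) (hmin : IsMinOn (h + q) s y)
    (hy : y ∈ s) (hu : u ∈ s) :
    h y - q' (u - y) ≤ h u := by
  have hseg : ∀ t : ℝ, y + t • (u - y) = (1 - t) • y + t • u := fun t => by module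
  -- Replacing `h` by its chord on `[y, u]` gives a differentiable majorant of `h + q` that agrees
  -- with it at `y`, so Fermat's rule applies to it at `t = 0`.
  let G : ℝ → ℝ := fun t => (1 - t) * h y + t * h u + q (y + t • (u - y))
  have hG_min : IsMinOn G (Icc 0 1) 0 := by
    rintro t ⟨ht0, ht1⟩
    have hmem : y + t • (u - y) ∈ s := hseg t ▸ hh.1 hy hu (by linarith) ht0 (by ring)
    have hconv := hseg t ▸ hh.2 hy hu (sub_nonneg.2 ht1) ht0 (by ring)
    have hle : h y + q y ≤ h (y + t • (u - y)) + q (y + t • (u - y)) := hmin hmem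
    simp only [smul_eq_mul] at hconv
    simp only [mem_ofPred_eq, G, zero_smul, add_zero, sub_zero, one_mul, zero_mul]
    linarith
  have hG' : HasDerivAt G (h u - h y + q' (u - y)) 0 := by
    have hline : HasDerivAt (fun t : ℝ => y + t • (u - y)) (u - y) 0 := by
      simpa using ((hasDerivAt_id (0 : ℝ)).smul_const (u - y)).const_add y
    have hqline : HasDerivAt (fun t : ℝ => q (y + t • (u - y))) (q' (u - y)) 0 :=
      (by simpa using hq : HasFDerivAt q q' (y + (0 : ℝ) • (u - y))).comp_hasDerivAt 0 hline
    have hsum := (((hasDerivAt_id' (0 : ℝ)).const_sub 1).mul_const (h y)).add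
      ((hasDerivAt_id' (0 : ℝ)).mul_const (h u)) |>.add hqline
    exact hsum.congr_deriv (by ring)
  have hone : (1 : ℝ) ∈ posTangentConeAt (Icc 0 1) 0 :=
    mem_posTangentConeAt_of_segment_subset (by simp [segment_eq_Icc])
  have hfermat := hG_min.localize.hasFDerivWithinAt_nonneg hG'.hasFDerivAt.hasFDerivWithinAt hone
  simp only [ContinuousLinearMap.toSpanSingleton_apply, smul_eq_mul, one_mul] at hfermat
  linarith

theorem stmt2_general {E : Type*} [NormedAddCommGroup E] [InnerProductSpace ℝ E]
    (s : Set E)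
    (f' : E → E)
    (h : E → ℝ) (hh : ConvexOn ℝ s h)
    (M : ℝ) (hM : 0 < M) (xt : E)
    (y : E) (hy : y ∈ s)
    (hmin : ∀ u ∈ s,
      (inner ℝ (f' xt) (y - xt) : ℝ) + h y + M / 2 * ‖y - xt‖ ^ 2
        ≤ (inner ℝ (f' xt) (u - xt) : ℝ) + h u + M / 2 * ‖u - xt‖ ^ 2) :
    (∀ u ∈ s,
      h u ≥ h y +
        (inner ℝ ((M • (xt - y) + f' y - f' xt) - f' y) (u - y) : ℝ)) ∧
    ‖M • (xt - y) + f' y - f' xt‖ ≤ M * ‖y - xt‖ + ‖f' y - f' xt‖ := by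
  refine ⟨fun u hu => ?_, ?_⟩
  · have hmin' : IsMinOn (h + fun u => ⟪f' xt, u - xt⟫ + M / 2 * ‖u - xt‖ ^ 2) s y :=
      fun u hu => by simp only [mem_ofPred_eq, Pi.add_apply]; linarith [hmin u hu]
    have hopt := hh.sub_le_of_isMinOn_add
      (hasFDerivAt_inner_sub_add_norm_sub_sq (f' xt) xt M y) hmin' hy hu
    have hv : (M • (xt - y) + f' y - f' xt) - f' y = -(f' xt + M • (y - xt)) := by module
    rw [coe_innerSL_apply] at hopt
    rw [hv, inner_neg_left]
    linarith
  · calc ‖M • (xt - y) + f' y - f' xt‖ = ‖M • (xt - y) + (f' y - f' xt)‖ := by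
          rw [add_sub_assoc]
      _ ≤ ‖M • (xt - y)‖ + ‖f' y - f' xt‖ := norm_add_le _ _
      _ = M * ‖y - xt‖ + ‖f' y - f' xt‖ := by
          rw [norm_smul, Real.norm_of_nonneg hM.le, norm_sub_rev]

/-- Lemma 1(d): if `y` minimizes `u ↦ ⟨∇f(x̃), u − x̃⟩ + h(u) + (M/2)‖u − x̃‖²`
over the convex set `s`, and `v := M•(x̃ − y) + ∇f(y) − ∇f(x̃)`, then
(i) `h(u) ≥ h(y) + ⟨v − ∇f(y), u − y⟩` for all `u ∈ s`, and
(ii) `‖v‖ ≤ M‖y − x̃‖ + ‖∇f(y) − ∇f(x̃)‖`. -/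
theorem stmt2 {E : Type*} [NormedAddCommGroup E] [InnerProductSpace ℝ E]
    (s : Set E) (hs : Convex ℝ s)
    (f : E → ℝ) (f' : E → E) (hf : ∀ z : E, HasFDerivAt f ((innerSL ℝ) (f' z)) z)
    (h : E → ℝ) (hh : ConvexOn ℝ s h)
    (M : ℝ) (hM : 0 < M) (xt : E) (hxt : xt ∈ s)
    (y : E) (hy : y ∈ s)
    (hmin : ∀ u ∈ s,
      (inner ℝ (f' xt) (y - xt) : ℝ) + h y + M / 2 * ‖y - xt‖ ^ 2
        ≤ (inner ℝ (f' xt) (u - xt) : ℝ) + h u + M / 2 * ‖u - xt‖ ^ 2) :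
    (∀ u ∈ s,
      h u ≥ h y +
        (inner ℝ ((M • (xt - y) + f' y - f' xt) - f' y) (u - y) : ℝ)) ∧
    ‖M • (xt - y) + f' y - f' xt‖ ≤ M * ‖y - xt‖ + ‖f' y - f' xt‖ :=
  stmt2_general s f' h hh M hM xt y hy hmin
end

section
/- Let s be a convex subset of a real inner product space E, let f : E → ℝ be differentiable with gradient ∇f, let h : E → ℝ be convex on s, let M > 0 and x̃ ∈ s, write ℓ_f(u; x̃) := f(x̃) + ⟨∇f(x̃), u − x̃⟩, and suppose y ∈ s minimizes u ↦ ℓ_f(u; x̃) + h(u) + (M/2)·‖u − x̃‖² over s. If moreover f(y) ≤ ℓ_f(y; x̃) + (M/2)·‖y − x̃‖² (i.e., M is a good upper curvature of f at x̃), then f(y) + h(y) ≤ f(x̃) + h(x̃) − (M/2)·‖y − x̃‖². -/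
/-!
Since `h` is convex and the linearization `ℓ_f(·; x̃)` is affine, comparing the value of the
prox subproblem at its minimizer `y` with its value at `y + t (x̃ - y)` and letting `t → 0⁺`
gives `ℓ_f(y; x̃) + h(y) + M‖y - x̃‖² ≤ f(x̃) + h(x̃)`. The good-curvature inequality
bounds `f(y)` by `ℓ_f(y; x̃) + (M/2)‖y - x̃‖²`, and adding the two leaves `-(M/2)‖y - x̃‖²`.
-/

open Filter Topology

lemma le_of_forall_mem_Ioc_sub_mul_le {a b c : ℝ} (h : ∀ t ∈ Set.Ioc (0 : ℝ) 1, a - t * c ≤ b) :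
    a ≤ b := by
  have hlim : Tendsto (fun t : ℝ => a - t * c) (𝓝[>] 0) (𝓝 a) :=
    ((continuous_const.sub (continuous_id.mul continuous_const)).tendsto' 0 a
      (by simp)).mono_left nhdsWithin_le_nhds
  exact le_of_tendsto hlim (eventually_of_mem (Ioc_mem_nhdsGT one_pos) h)

lemma ConvexOn.add_mul_sq_norm_le_of_isMinOn {E : Type*} [SeminormedAddCommGroup E]
    [NormedSpace ℝ E] {s : Set E} {φ : E → ℝ} (hφ : ConvexOn ℝ s φ) {M : ℝ} {x y : E}
    (hx : x ∈ s) (hy : y ∈ s) (hmin : IsMinOn (fun u => φ u + M / 2 * ‖u - x‖ ^ 2) s y) :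
    φ y + M * ‖y - x‖ ^ 2 ≤ φ x := by
  refine le_of_forall_mem_Ioc_sub_mul_le (c := M / 2 * ‖y - x‖ ^ 2) fun t ⟨ht0, ht1⟩ => ?_
  have h1t : 0 ≤ 1 - t := by linarith
  have hmem : (1 - t) • y + t • x ∈ s := hφ.1 hy hx h1t ht0.le (by ring)
  have hnorm : ‖(1 - t) • y + t • x - x‖ ^ 2 = (1 - t) ^ 2 * ‖y - x‖ ^ 2 := by
    rw [show (1 - t) • y + t • x - x = (1 - t) • (y - x) by module, norm_smul,
      Real.norm_eq_abs, abs_of_nonneg h1t, mul_pow]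
  have hconv : φ ((1 - t) • y + t • x) ≤ (1 - t) * φ y + t * φ x :=
    hφ.2 hy hx h1t ht0.le (by ring)
  have hcmp := isMinOn_iff.1 hmin _ hmem
  rw [hnorm] at hcmp
  -- `hcmp` and `hconv` give `t * (φ y + M/2 (2 - t) ‖y - x‖²) ≤ t * φ x`; divide by `t > 0`.
  have : t * (φ y + M * ‖y - x‖ ^ 2 - t * (M / 2 * ‖y - x‖ ^ 2)) ≤ t * φ x := by
    nlinarith
  exact le_of_mul_le_mul_left this ht0

theorem stmt3_general {E : Type*} [NormedAddCommGroup E] [InnerProductSpace ℝ E]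
    (s : Set E)
    (f : E → ℝ) (f' : E → E)
    (h : E → ℝ) (hh : ConvexOn ℝ s h)
    (M : ℝ) (xt : E) (hxt : xt ∈ s)
    (y : E) (hy : y ∈ s)
    (hmin : ∀ u ∈ s,
      f xt + (inner ℝ (f' xt) (y - xt) : ℝ) + h y + M / 2 * ‖y - xt‖ ^ 2
        ≤ f xt + (inner ℝ (f' xt) (u - xt) : ℝ) + h u + M / 2 * ‖u - xt‖ ^ 2)
    (hgood : f y ≤ f xt + (inner ℝ (f' xt) (y - xt) : ℝ) + M / 2 * ‖y - xt‖ ^ 2) :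
    f y + h y ≤ f xt + h xt - M / 2 * ‖y - xt‖ ^ 2 := by
  have hmodel : ConvexOn ℝ s fun u => f xt + inner ℝ (f' xt) (u - xt) + h u := by
    refine (((innerₛₗ ℝ (f' xt)).convexOn hh.1).add_const
      (f xt - inner ℝ (f' xt) xt)).add hh |>.congr fun u _ => ?_
    simp only [Pi.add_apply, innerₛₗ_apply_apply, inner_sub_right]
    ring
  have hdescent := hmodel.add_mul_sq_norm_le_of_isMinOn hxt hy hmin
  simp only [sub_self, inner_zero_right, add_zero] at hdescent
  linarith

/-- Lemma 11 (appendix): if `y` minimizes the linearized prox subproblem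
`u ↦ ℓ_f(u; x̃) + h(u) + (M/2)‖u − x̃‖²` over the convex set `s` and `M` is a
good upper curvature of `f` at `x̃` (i.e. `f(y) ≤ ℓ_f(y; x̃) + (M/2)‖y − x̃‖²`),
then `φ(y) ≤ φ(x̃) − (M/2)‖y − x̃‖²` where `φ = f + h`. -/
theorem stmt3 {E : Type*} [NormedAddCommGroup E] [InnerProductSpace ℝ E]
    (s : Set E) (hs : Convex ℝ s)
    (f : E → ℝ) (f' : E → E) (hf : ∀ z : E, HasFDerivAt f ((innerSL ℝ) (f' z)) z)
    (h : E → ℝ) (hh : ConvexOn ℝ s h)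
    (M : ℝ) (hM : 0 < M) (xt : E) (hxt : xt ∈ s)
    (y : E) (hy : y ∈ s)
    (hmin : ∀ u ∈ s,
      f xt + (inner ℝ (f' xt) (y - xt) : ℝ) + h y + M / 2 * ‖y - xt‖ ^ 2
        ≤ f xt + (inner ℝ (f' xt) (u - xt) : ℝ) + h u + M / 2 * ‖u - xt‖ ^ 2)
    (hgood : f y ≤ f xt + (inner ℝ (f' xt) (y - xt) : ℝ) + M / 2 * ‖y - xt‖ ^ 2) :
    f y + h y ≤ f xt + h xt - M / 2 * ‖y - xt‖ ^ 2 :=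
  stmt3_general s f f' h hh M xt hxt y hy hmin hgood
end

section
/- Let α > 0, μ > 0, and let C : ℕ → ℝ be a sequence with C_j ≥ 0 for all j. Define C^avg_k := (1/(k+1))·∑_{j=0}^{k} C_j, M_0 := μ, and M_k := max{ C^avg_{k−1}/α, μ } for k ≥ 1. Then for all integers i, k with 1 ≤ i < k, one has M_k ≥ (i/k)·M_i. -/
/-! Partial sums of a nonnegative sequence are monotone, so `i · C^avg_{i-1} ≤ k · C^avg_{k-1}`;
and multiplying by `i/k ≤ 1` can only lower the floor `μ` inside the maximum. -/

open Finset

lemma mul_max_le_max_mul {t x μ : ℝ} (ht₀ : 0 ≤ t) (ht₁ : t ≤ 1) (hμ : 0 ≤ μ) :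
    t * max x μ ≤ max (t * x) μ := by
  rw [mul_max_of_nonneg _ _ ht₀]
  exact max_le_max le_rfl (mul_le_of_le_one_left hμ ht₁)

lemma div_mul_sum_range_div_le {f : ℕ → ℝ} (hf : ∀ j, 0 ≤ f j) {i k : ℕ} (hi : 1 ≤ i)
    (hik : i ≤ k) :
    (i / k : ℝ) * ((∑ j ∈ range i, f j) / i) ≤ (∑ j ∈ range k, f j) / k := by
  have hi' : (i : ℝ) ≠ 0 := by positivity
  rw [div_mul_div_comm, mul_comm (i : ℝ), mul_div_mul_right _ _ hi']
  gcongr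
  exact fun j _ _ ↦ hf j

lemma running_avg_pred_eq {C Cavg : ℕ → ℝ}
    (hCavg : ∀ k, Cavg k = (1 / ((k : ℝ) + 1)) * ∑ j ∈ range (k + 1), C j) {k : ℕ}
    (hk : 1 ≤ k) :
    Cavg (k - 1) = (∑ j ∈ range k, C j) / k := by
  obtain ⟨n, rfl⟩ := Nat.exists_eq_add_of_le' hk
  rw [hCavg, Nat.add_sub_cancel]
  push_cast
  ring

theorem stmt4_general (α μ : ℝ) (hα : 0 < α) (hμ : 0 < μ)
    (C : ℕ → ℝ) (hC : ∀ j, 0 ≤ C j)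
    (Cavg : ℕ → ℝ)
    (hCavg : ∀ k, Cavg k = (1 / ((k : ℝ) + 1)) * ∑ j ∈ Finset.range (k + 1), C j)
    (M : ℕ → ℝ)
    (hMk : ∀ k : ℕ, 1 ≤ k → M k = max (Cavg (k - 1) / α) μ)
    (i k : ℕ) (hi : 1 ≤ i) (hik : i < k) :
    M k ≥ ((i : ℝ) / (k : ℝ)) * M i := by
  have hk : 1 ≤ k := hi.trans hik.le
  have hratio₀ : 0 ≤ (i / k : ℝ) := by positivity
  have hratio₁ : (i / k : ℝ) ≤ 1 := div_le_one_of_le₀ (by exact_mod_cast hik.le) (by positivity)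
  have havg : (i / k : ℝ) * Cavg (i - 1) ≤ Cavg (k - 1) := by
    rw [running_avg_pred_eq hCavg hi, running_avg_pred_eq hCavg hk]
    exact div_mul_sum_range_div_le hC hi hik.le
  rw [hMk k hk, hMk i hi]
  calc (i / k : ℝ) * max (Cavg (i - 1) / α) μ
      ≤ max ((i / k : ℝ) * Cavg (i - 1) / α) μ := by
        rw [mul_div_assoc]; exact mul_max_le_max_mul hratio₀ hratio₁ hμ.le
    _ ≤ max (Cavg (k - 1) / α) μ := by gcongr

/-- Lemma 6: for the modified average curvature sequence
`M_0 = μ`, `M_k = max{C^avg_{k−1}/α, μ}` built from a nonnegative sequence `C`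
with running averages `C^avg_k = (1/(k+1))·∑_{j=0}^k C_j`, one has
`M_k ≥ (i/k)·M_i` for all `1 ≤ i < k`. -/
theorem stmt4 (α μ : ℝ) (hα : 0 < α) (hμ : 0 < μ)
    (C : ℕ → ℝ) (hC : ∀ j, 0 ≤ C j)
    (Cavg : ℕ → ℝ)
    (hCavg : ∀ k, Cavg k = (1 / ((k : ℝ) + 1)) * ∑ j ∈ Finset.range (k + 1), C j)
    (M : ℕ → ℝ) (hM0 : M 0 = μ)
    (hMk : ∀ k : ℕ, 1 ≤ k → M k = max (Cavg (k - 1) / α) μ)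
    (i k : ℕ) (hi : 1 ≤ i) (hik : i < k) :
    M k ≥ ((i : ℝ) / (k : ℝ)) * M i :=
  stmt4_general α μ hα hμ C hC Cavg hCavg M hMk i k hi hik
end

section
/- Let M : ℕ → ℝ be any sequence with M_i > 0 for all i, and define A : ℕ → ℝ and a : ℕ → ℝ by A_0 := 0, a_k := (1 + √(1 + 4·M_k·A_k))/(2·M_k), A_{k+1} := A_k + a_k. Let θ_k := max_{0 ≤ i ≤ k} M_k/M_i. Then for every k ≥ 12: A_k ≤ ( ∑_{i=0}^{k−1} 1/√(M_i) )² ≤ k·∑_{i=0}^{k−1} 1/M_i ≤ k²·θ_k/M_k. -/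
/-!
Since `√(1 + 4 M A) ≤ 1 + 2 √(M A)`, one step gives `a_k ≤ 1/M_k + √(A_k / M_k)`, so
`A_k + a_k ≤ (√A_k + 1/√M_k)²`: the square root of `A` grows by at most `1/√M_k` per step.
The second inequality is Cauchy–Schwarz, the third is `1/M_i ≤ θ_k / M_k` for `i < k`.
-/

open Finset Real

noncomputable def accelStep (m x : ℝ) : ℝ := (1 + √(1 + 4 * m * x)) / (2 * m)

lemma accelStep_nonneg {m : ℝ} (hm : 0 < m) (x : ℝ) : 0 ≤ accelStep m x := by
  unfold accelStep; positivity

lemma add_accelStep_le_sq {m x : ℝ} (hm : 0 < m) (hx : 0 ≤ x) :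
    x + accelStep m x ≤ (√x + 1 / √m) ^ 2 := by
  have hsm : 0 < √m := sqrt_pos.2 hm
  have hroot : √(1 + 4 * m * x) ≤ 1 + 2 * √m * √x := by
    rw [sqrt_le_left (by positivity)]
    nlinarith [sq_sqrt hm.le, sq_sqrt hx, mul_nonneg hsm.le (sqrt_nonneg x)]
  calc x + accelStep m x ≤ x + (1 + (1 + 2 * √m * √x)) / (2 * m) := by
        unfold accelStep; gcongr
    _ = x + 1 / m + √x / √m := by
        field_simp
        linear_combination 2 * √x * mul_self_sqrt hm.le
    _ ≤ (√x + 1 / √m) ^ 2 := by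
        rw [add_sq, div_pow, one_pow, sq_sqrt hm.le, sq_sqrt hx]
        have : 0 ≤ √x / √m := by positivity
        linarith [show 2 * √x * (1 / √m) = 2 * (√x / √m) by ring]

lemma sq_sum_one_div_sqrt_le {ι : Type*} (s : Finset ι) {f : ι → ℝ} (hf : ∀ i ∈ s, 0 ≤ f i) :
    (∑ i ∈ s, 1 / √(f i)) ^ 2 ≤ #s * ∑ i ∈ s, 1 / f i := by
  calc (∑ i ∈ s, 1 / √(f i)) ^ 2 ≤ #s * ∑ i ∈ s, (1 / √(f i)) ^ 2 := sq_sum_le_card_mul_sum_sq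
    _ = #s * ∑ i ∈ s, 1 / f i := by
        congr 1
        refine sum_congr rfl fun i hi => ?_
        rw [div_pow, one_pow, sq_sqrt (hf i hi)]

lemma sum_one_div_le_card_mul_div {ι : Type*} (s : Finset ι) {f : ι → ℝ} {m c : ℝ} (hm : 0 < m)
    (hc : ∀ i ∈ s, m / f i ≤ c) : ∑ i ∈ s, 1 / f i ≤ #s * (c / m) := by
  calc ∑ i ∈ s, 1 / f i = ∑ i ∈ s, m / f i / m := by
        refine sum_congr rfl fun i _ => ?_
        field_simp
    _ ≤ ∑ i ∈ s, c / m := sum_le_sum fun i hi => by gcongr; exact hc i hi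
    _ = #s * (c / m) := by rw [sum_const, nsmul_eq_mul]

lemma accelSeq_nonneg {M A a : ℕ → ℝ} (hM : ∀ i, 0 < M i) (hA0 : A 0 = 0)
    (ha : ∀ k, a k = accelStep (M k) (A k)) (hA : ∀ k, A (k + 1) = A k + a k) (k : ℕ) :
    0 ≤ A k := by
  induction k with
  | zero => rw [hA0]
  | succ k ih => rw [hA, ha]; exact add_nonneg ih (accelStep_nonneg (hM k) _)

lemma accelSeq_le_sq_sum_one_div_sqrt {M A a : ℕ → ℝ} (hM : ∀ i, 0 < M i) (hA0 : A 0 = 0)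
    (ha : ∀ k, a k = accelStep (M k) (A k)) (hA : ∀ k, A (k + 1) = A k + a k) (k : ℕ) :
    A k ≤ (∑ i ∈ range k, 1 / √(M i)) ^ 2 := by
  induction k with
  | zero => simp [hA0]
  | succ k ih =>
    have hS : 0 ≤ ∑ i ∈ range k, 1 / √(M i) := sum_nonneg fun i _ => by positivity
    have hsqrt : √(A k) ≤ ∑ i ∈ range k, 1 / √(M i) := (sqrt_le_left hS).2 ih
    calc A (k + 1) ≤ (√(A k) + 1 / √(M k)) ^ 2 := by
          rw [hA, ha]; exact add_accelStep_le_sq (hM k) (accelSeq_nonneg hM hA0 ha hA k)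
      _ ≤ (∑ i ∈ range (k + 1), 1 / √(M i)) ^ 2 := by
          rw [sum_range_succ]; gcongr

theorem stmt5_general (M : ℕ → ℝ) (hM : ∀ i, 0 < M i)
    (A a : ℕ → ℝ) (hA0 : A 0 = 0)
    (ha : ∀ k, a k = (1 + Real.sqrt (1 + 4 * M k * A k)) / (2 * M k))
    (hA : ∀ k, A (k + 1) = A k + a k)
    (k : ℕ) :
    A k ≤ (∑ i ∈ Finset.range k, 1 / Real.sqrt (M i)) ^ 2 ∧
    (∑ i ∈ Finset.range k, 1 / Real.sqrt (M i)) ^ 2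
      ≤ (k : ℝ) * ∑ i ∈ Finset.range k, 1 / M i ∧
    (k : ℝ) * ∑ i ∈ Finset.range k, 1 / M i
      ≤ (k : ℝ) ^ 2 *
        ((Finset.range (k + 1)).sup' (Finset.nonempty_range_iff.mpr (Nat.succ_ne_zero k))
          (fun i => M k / M i)) / M k := by
  set θ := (range (k + 1)).sup' (nonempty_range_iff.mpr (Nat.succ_ne_zero k)) fun i => M k / M i
  have hθ : ∀ i ∈ range k, M k / M i ≤ θ := fun i hi =>
    le_sup' (fun i => M k / M i) (mem_range.2 (Nat.lt_succ_of_lt (mem_range.1 hi)))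
  refine ⟨accelSeq_le_sq_sum_one_div_sqrt hM hA0 ha hA k, ?_, ?_⟩
  · simpa using sq_sum_one_div_sqrt_le (range k) fun i _ => (hM i).le
  · have hsum := sum_one_div_le_card_mul_div (range k) (hM k) hθ
    rw [card_range] at hsum
    calc (k : ℝ) * ∑ i ∈ range k, 1 / M i ≤ k * (k * (θ / M k)) := by gcongr
      _ = k ^ 2 * θ / M k := by ring

/-- Lemma 7, upper-bound chain (4.9): with `A_0 = 0`,
`a_k = (1 + √(1 + 4 M_k A_k))/(2 M_k)`, `A_{k+1} = A_k + a_k` and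
`θ_k = max_{0 ≤ i ≤ k} M_k/M_i`, for every `k ≥ 12`:
`A_k ≤ (∑_{i<k} 1/√M_i)² ≤ k ∑_{i<k} 1/M_i ≤ k² θ_k / M_k`. -/
theorem stmt5 (M : ℕ → ℝ) (hM : ∀ i, 0 < M i)
    (A a : ℕ → ℝ) (hA0 : A 0 = 0)
    (ha : ∀ k, a k = (1 + Real.sqrt (1 + 4 * M k * A k)) / (2 * M k))
    (hA : ∀ k, A (k + 1) = A k + a k)
    (k : ℕ) (hk : 12 ≤ k) :
    A k ≤ (∑ i ∈ Finset.range k, 1 / Real.sqrt (M i)) ^ 2 ∧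
    (∑ i ∈ Finset.range k, 1 / Real.sqrt (M i)) ^ 2
      ≤ (k : ℝ) * ∑ i ∈ Finset.range k, 1 / M i ∧
    (k : ℝ) * ∑ i ∈ Finset.range k, 1 / M i
      ≤ (k : ℝ) ^ 2 *
        ((Finset.range (k + 1)).sup' (Finset.nonempty_range_iff.mpr (Nat.succ_ne_zero k))
          (fun i => M k / M i)) / M k :=
  stmt5_general M hM A a hA0 ha hA k
end

section
/- Let M : ℕ → ℝ be a sequence with M_i > 0 for all i, and define A : ℕ → ℝ and a : ℕ → ℝ by A_0 := 0, a_k := (1 + √(1 + 4·M_k·A_k))/(2·M_k), A_{k+1} := A_k + a_k. Let k ≥ 12 and suppose that M_k ≥ (i/k)·M_i for every integer i with 1 ≤ i < k. Then A_k ≥ (1/4)·( ∑_{i=0}^{k−1} 1/√(M_i) )² ≥ k²/(12·M_k). -/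
/-!
Writing `a = (1 + √(1 + 4 m A)) / (2 m)` for the positive root of `m a² = A + a`, one gets
`√(A + a) = √m · a ≥ √A + 1 / (2 √m)`, so `√A_k` grows by at least `1 / (2 √M_i)` at step `i`,
which gives the first inequality. For the second, the averaging property says `i M_i ≤ k M_k`,
hence `1 / √M_i ≥ √i / √(k M_k)`, and `∑_{i<k} √i ≥ (2/3) (k-1)^{3/2}` by telescoping
`(2/3) i^{3/2}`; the numerical constant works out once `k ≥ 12`.
-/

open Finset Real

/-- The step `a_k` of the paper, as a function of `M_k` and `A_k`. -/
noncomputable def stepSize (m A : ℝ) : ℝ := (1 + √(1 + 4 * m * A)) / (2 * m)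

lemma stepSize_nonneg {m : ℝ} (hm : 0 < m) (A : ℝ) : 0 ≤ stepSize m A := by
  unfold stepSize; positivity

lemma mul_stepSize_sq {m A : ℝ} (hm : 0 < m) (hA : 0 ≤ A) :
    m * stepSize m A ^ 2 = A + stepSize m A := by
  have hs : √(1 + 4 * m * A) ^ 2 = 1 + 4 * m * A := sq_sqrt (by positivity)
  unfold stepSize
  generalize √(1 + 4 * m * A) = s at hs ⊢
  field_simp
  linear_combination hs

lemma sqrt_add_one_div_two_sqrt_le {m A : ℝ} (hm : 0 < m) (hA : 0 ≤ A) :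
    √A + 1 / (2 * √m) ≤ √(A + stepSize m A) := by
  have hroot : 2 * √m * √A ≤ √(1 + 4 * m * A) :=
    le_sqrt_of_sq_le (by rw [mul_pow, mul_pow, sq_sqrt hm.le, sq_sqrt hA]; linarith)
  have hsqrt : √(A + stepSize m A) = (1 + √(1 + 4 * m * A)) / (2 * √m) := by
    rw [← mul_stepSize_sq hm hA, sqrt_mul hm.le, sqrt_sq (stepSize_nonneg hm A), stepSize]
    field_simp
    linear_combination sq_sqrt hm.le
  have hsm : 0 < √m := sqrt_pos.2 hm
  rw [hsqrt, le_div_iff₀ (by positivity)]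
  field_simp
  linarith

lemma sum_range_le_of_le_sub {c f : ℕ → ℝ} (hf0 : f 0 = 0) (hc : ∀ i, c i ≤ f (i + 1) - f i)
    (n : ℕ) : ∑ i ∈ range n, c i ≤ f n :=
  calc ∑ i ∈ range n, c i ≤ ∑ i ∈ range n, (f (i + 1) - f i) := sum_le_sum fun i _ => hc i
    _ = f n := by rw [sum_range_sub, hf0, sub_zero]

lemma two_thirds_cube_sub_le {u v : ℝ} (hu : 0 ≤ u) (hv : 0 ≤ v) (huv : v ^ 2 = u ^ 2 + 1) :
    2 / 3 * (v ^ 2 * v) - 2 / 3 * (u ^ 2 * u) ≤ v := by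
  -- `v³ - 3 v u² + 2 u³ = (v - u)² (v + 2 u)`
  nlinarith [mul_nonneg (sq_nonneg (v - u)) (by positivity : 0 ≤ v + 2 * u)]

lemma two_thirds_mul_sqrt_le_sum_sqrt (n : ℕ) :
    2 / 3 * (n * √n) ≤ ∑ i ∈ range (n + 1), √(i : ℝ) := by
  induction n with
  | zero => simp
  | succ n ih =>
    have hstep := two_thirds_cube_sub_le (sqrt_nonneg n) (sqrt_nonneg (n + 1))
      (by rw [sq_sqrt (by positivity), sq_sqrt (by positivity)])
    rw [sq_sqrt (by positivity), sq_sqrt (by positivity)] at hstep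
    rw [sum_range_succ]
    push_cast
    linarith

lemma sqrt_div_sqrt_le_one_div_sqrt {x y m : ℝ} (hx : 0 ≤ x) (hy : 0 < y) (hm : 0 < m)
    (h : x * m ≤ y) : √x / √y ≤ 1 / √m := by
  rw [div_le_div_iff₀ (sqrt_pos.2 hy) (sqrt_pos.2 hm), one_mul, ← sqrt_mul hx]
  exact sqrt_le_sqrt h

lemma index_mul_le_of_averaging {M : ℕ → ℝ} (hM : ∀ i, 0 < M i) {k : ℕ}
    (havg : ∀ i : ℕ, 1 ≤ i → i < k → M k ≥ ((i : ℝ) / (k : ℝ)) * M i) :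
    ∀ i < k, i * M i ≤ k * M k := by
  intro i hi
  rcases Nat.eq_zero_or_pos i with rfl | hi0
  · simpa using mul_nonneg k.cast_nonneg (hM k).le
  · have h := havg i hi0 hi
    rw [ge_iff_le, div_mul_eq_mul_div, div_le_iff₀ (Nat.cast_pos.2 (hi0.trans hi))] at h
    linarith

lemma two_thirds_div_le_sum_one_div_sqrt {M : ℕ → ℝ} (hM : ∀ i, 0 < M i) {n : ℕ}
    (h : ∀ i < n + 1, i * M i ≤ (n + 1 : ℕ) * M (n + 1)) :
    2 / 3 * (n * √n) / √((n + 1 : ℕ) * M (n + 1)) ≤ ∑ i ∈ range (n + 1), 1 / √(M i) := by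
  have hpos : 0 < ((n + 1 : ℕ) : ℝ) * M (n + 1) := mul_pos (by positivity) (hM _)
  calc 2 / 3 * (n * √n) / √((n + 1 : ℕ) * M (n + 1))
      ≤ (∑ i ∈ range (n + 1), √(i : ℝ)) / √((n + 1 : ℕ) * M (n + 1)) :=
        div_le_div_of_nonneg_right (two_thirds_mul_sqrt_le_sum_sqrt n) (sqrt_nonneg _)
    _ = ∑ i ∈ range (n + 1), √(i : ℝ) / √((n + 1 : ℕ) * M (n + 1)) := sum_div ..
    _ ≤ ∑ i ∈ range (n + 1), 1 / √(M i) := sum_le_sum fun i hi =>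
        sqrt_div_sqrt_le_one_div_sqrt i.cast_nonneg hpos (hM i) (h i (mem_range.1 hi))

lemma sq_div_le_of_eleven_le {n : ℕ} (hn : 11 ≤ n) {m : ℝ} (hm : 0 < m) :
    ((n + 1 : ℕ) : ℝ) ^ 2 / (12 * m) ≤ 1 / 4 * (2 / 3 * (n * √n) / √((n + 1 : ℕ) * m)) ^ 2 := by
  have hn' : (11 : ℝ) ≤ n := by exact_mod_cast hn
  rw [div_pow, mul_pow, mul_pow, sq_sqrt n.cast_nonneg, sq_sqrt (by positivity)]
  push_cast
  rw [div_le_iff₀ (by positivity)]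
  field_simp
  -- `4 n³ ≥ 3 (n + 1)³` for `n ≥ 11`
  nlinarith [mul_nonneg (sub_nonneg.2 hn') (sq_nonneg (n : ℝ)), mul_nonneg (sub_nonneg.2 hn') hm.le,
    mul_nonneg (mul_nonneg (sub_nonneg.2 hn') (sq_nonneg (n : ℝ))) hm.le]

/-- Lemma 7, lower-bound chain (4.10): with `A_0 = 0`,
`a_k = (1 + √(1 + 4 M_k A_k))/(2 M_k)`, `A_{k+1} = A_k + a_k`, if `k ≥ 12` and
`M_k ≥ (i/k) M_i` for all `1 ≤ i < k`, then
`A_k ≥ (1/4)(∑_{i<k} 1/√M_i)² ≥ k²/(12 M_k)`. -/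
theorem stmt6 (M : ℕ → ℝ) (hM : ∀ i, 0 < M i)
    (A a : ℕ → ℝ) (hA0 : A 0 = 0)
    (ha : ∀ k, a k = (1 + Real.sqrt (1 + 4 * M k * A k)) / (2 * M k))
    (hA : ∀ k, A (k + 1) = A k + a k)
    (k : ℕ) (hk : 12 ≤ k)
    (havg : ∀ i : ℕ, 1 ≤ i → i < k → M k ≥ ((i : ℝ) / (k : ℝ)) * M i) :
    A k ≥ 1 / 4 * (∑ i ∈ Finset.range k, 1 / Real.sqrt (M i)) ^ 2 ∧
    1 / 4 * (∑ i ∈ Finset.range k, 1 / Real.sqrt (M i)) ^ 2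
      ≥ (k : ℝ) ^ 2 / (12 * M k) := by
  have hAstep : ∀ n, A (n + 1) = A n + stepSize (M n) (A n) := fun n => by rw [hA, ha]; rfl
  have hA_nonneg : ∀ n, 0 ≤ A n := by
    intro n
    induction n with
    | zero => exact hA0.ge
    | succ n ih => rw [hAstep]; exact add_nonneg ih (stepSize_nonneg (hM n) _)
  have hsqrtA : 1 / 2 * ∑ i ∈ range k, 1 / √(M i) ≤ √(A k) := by
    rw [mul_sum]
    refine sum_range_le_of_le_sub (f := fun n => √(A n)) (by rw [hA0, sqrt_zero]) (fun i => ?_) k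
    rw [hAstep, le_sub_iff_add_le', one_div_mul_one_div]
    exact sqrt_add_one_div_two_sqrt_le (hM i) (hA_nonneg i)
  refine ⟨?_, ?_⟩
  · rw [ge_iff_le, ← sq_sqrt (hA_nonneg k)]
    nlinarith [sum_nonneg fun i (_ : i ∈ range k) => one_div_nonneg.2 (sqrt_nonneg (M i))]
  · obtain ⟨n, rfl⟩ : ∃ n, k = n + 1 := ⟨k - 1, by omega⟩
    calc ((n + 1 : ℕ) : ℝ) ^ 2 / (12 * M (n + 1))
        ≤ 1 / 4 * (2 / 3 * (n * √n) / √((n + 1 : ℕ) * M (n + 1))) ^ 2 :=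
          sq_div_le_of_eleven_le (by omega) (hM _)
      _ ≤ 1 / 4 * (∑ i ∈ range (n + 1), 1 / √(M i)) ^ 2 := by
          gcongr
          exact two_thirds_div_le_sum_one_div_sqrt hM (index_mul_le_of_averaging hM havg)
end

section
/- Let γ ∈ (0,1), α := (0.9/8)·(1 + 1/(0.9·γ))⁻¹, let M̄ > 0 and M ≥ M̄, and let C : ℕ → ℝ satisfy 0 ≤ C_j ≤ M̄ for all j. Define C^avg_k := (1/(k+1))·∑_{j=0}^{k} C_j, M_0 := γ·M, M_k := max{ C^avg_{k−1}/α, γ·M } for k ≥ 1, and ℬ_k := { i : 0 ≤ i ≤ k−1 and C_i > 0.9·M_i }. Then for every k ≥ 12, the cardinality of ℬ_k satisfies |ℬ_k| ≤ k/3. -/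
/-!
Every bad index `j` has `C j > 0.9 · M_j ≥ 0.9 γ M̄`. At a bad index `i ≥ 1`, `M_i` dominates
`(∑_{j<i} C j)/(iα)`, so `0.9 (∑_{j<i} C j)/(iα) < C i ≤ M̄`; bounding the sum below by the bad
indices `j < i` and using `α ≤ 0.81 γ / 8` shows that fewer than `i/8` of them precede `i`.
Applied at the last bad index `i ≤ k - 1`, this gives `|ℬ_k| ≤ k/8 + 1 ≤ k/3` once `k ≥ 5`.
-/

open Finset

lemma inv_one_add_one_div_le {b : ℝ} (hb : 0 < b) : (1 + 1 / b)⁻¹ ≤ b :=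
  inv_le_of_inv_le₀ hb (by rw [one_div]; linarith)

lemma card_filter_range_le_mul_add_one {P : ℕ → Prop} [DecidablePred P] {a : ℝ} (ha : 0 ≤ a)
    (h : ∀ i, P i → (#((range i).filter P) : ℝ) ≤ a * i) (k : ℕ) :
    (#((range k).filter P) : ℝ) ≤ a * k + 1 := by
  induction k with
  | zero => simp
  | succ k ih =>
    rw [range_add_one, filter_insert]
    split_ifs with hk
    · rw [card_insert_of_notMem (by simp)]
      push_cast
      linarith [h k hk]
    · push_cast
      linarith

lemma card_filter_bad_le_div_eight {C Mseq : ℕ → ℝ} {γ α Mbar : ℝ} (hγ : 0 < γ)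
    (hMbar : 0 < Mbar) (hα0 : 0 < α) (hα : α ≤ 0.9 * (0.9 * γ) / 8)
    (hC0 : ∀ j, 0 ≤ C j) (hCM : ∀ j, C j ≤ Mbar) (hfloor : ∀ j, γ * Mbar ≤ Mseq j)
    (havg : ∀ i, 1 ≤ i → (∑ j ∈ range i, C j) / (i * α) ≤ Mseq i)
    {i : ℕ} (hi : 0.9 * Mseq i < C i) :
    (#((range i).filter fun j => 0.9 * Mseq j < C j) : ℝ) ≤ i / 8 := by
  rcases Nat.eq_zero_or_pos i with rfl | hi1
  · simp
  set bad := (range i).filter fun j => 0.9 * Mseq j < C j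
  have hcount : #bad * (0.9 * (γ * Mbar)) ≤ ∑ j ∈ range i, C j :=
    calc #bad * (0.9 * (γ * Mbar))
        ≤ ∑ j ∈ bad, C j := by
          rw [← nsmul_eq_mul]
          refine card_nsmul_le_sum _ _ _ fun j hj => ?_
          linarith [(mem_filter.1 hj).2, hfloor j]
      _ ≤ ∑ j ∈ range i, C j :=
          sum_le_sum_of_subset_of_nonneg (filter_subset _ _) fun j _ _ => hC0 j
  have hsum : 0.9 * ∑ j ∈ range i, C j < i * α * Mbar := by
    have h : 0.9 * ((∑ j ∈ range i, C j) / (i * α)) < Mbar := by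
      linarith [havg i hi1, hCM i]
    have hiα : (0 : ℝ) < i * α := by positivity
    rwa [mul_div_assoc', div_lt_iff₀ hiα, mul_comm Mbar] at h
  have hiMbar : (0 : ℝ) ≤ i * Mbar := by positivity
  have h : #bad * (0.81 * (γ * Mbar)) < i / 8 * (0.81 * (γ * Mbar)) := by
    nlinarith [mul_le_mul_of_nonneg_left hα hiMbar]
  exact (lt_of_mul_lt_mul_right h (by positivity)).le

theorem stmt7_general (γ : ℝ) (hγ0 : 0 < γ)
    (α : ℝ) (hα : α = 0.9 / 8 * (1 + 1 / (0.9 * γ))⁻¹)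
    (Mbar M : ℝ) (hMbar : 0 < Mbar) (hM : Mbar ≤ M)
    (C : ℕ → ℝ) (hC0 : ∀ j, 0 ≤ C j) (hCM : ∀ j, C j ≤ Mbar)
    (Cavg : ℕ → ℝ)
    (hCavg : ∀ k, Cavg k = (1 / ((k : ℝ) + 1)) * ∑ j ∈ Finset.range (k + 1), C j)
    (Mseq : ℕ → ℝ) (hM0 : Mseq 0 = γ * M)
    (hMk : ∀ k : ℕ, 1 ≤ k → Mseq k = max (Cavg (k - 1) / α) (γ * M))
    (k : ℕ) (hk : 12 ≤ k) :
    (((Finset.range k).filter (fun i => 0.9 * Mseq i < C i)).card : ℝ) ≤ k / 3 := by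
  have hα0 : 0 < α := by rw [hα]; positivity
  have hαle : α ≤ 0.9 * (0.9 * γ) / 8 := by
    have := inv_one_add_one_div_le (by positivity : (0 : ℝ) < 0.9 * γ)
    rw [hα]
    linarith
  have hfloor : ∀ j, γ * Mbar ≤ Mseq j := by
    intro j
    have hγM : γ * Mbar ≤ γ * M := by gcongr
    rcases Nat.eq_zero_or_pos j with rfl | hj
    · rw [hM0]; exact hγM
    · rw [hMk j hj]; exact le_max_of_le_right hγM
  have havg : ∀ i, 1 ≤ i → (∑ j ∈ range i, C j) / (i * α) ≤ Mseq i := by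
    intro i hi
    obtain ⟨m, rfl⟩ := Nat.exists_eq_add_of_le' hi
    rw [hMk _ hi, Nat.add_sub_cancel, hCavg]
    refine le_max_of_le_left (le_of_eq ?_)
    push_cast
    field_simp
  have hcard := card_filter_range_le_mul_add_one (by norm_num : (0 : ℝ) ≤ 1 / 8)
    (fun i hi => (card_filter_bad_le_div_eight hγ0 hMbar hα0 hαle hC0 hCM hfloor havg hi).trans_eq
      (by ring)) k
  have hkR : (12 : ℝ) ≤ k := by exact_mod_cast hk
  linarith

/-- Lemma 5: with `γ ∈ (0,1)`, `α = (0.9/8)(1 + 1/(0.9 γ))⁻¹`, `0 ≤ C_j ≤ M̄ ≤ M`,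
running averages `C^avg`, and `M_0 = γM`, `M_k = max{C^avg_{k−1}/α, γM}`, the set
`ℬ_k = {i ≤ k−1 : C_i > 0.9 M_i}` of bad iterations satisfies `|ℬ_k| ≤ k/3`
for every `k ≥ 12`. -/
theorem stmt7 (γ : ℝ) (hγ0 : 0 < γ) (hγ1 : γ < 1)
    (α : ℝ) (hα : α = 0.9 / 8 * (1 + 1 / (0.9 * γ))⁻¹)
    (Mbar M : ℝ) (hMbar : 0 < Mbar) (hM : Mbar ≤ M)
    (C : ℕ → ℝ) (hC0 : ∀ j, 0 ≤ C j) (hCM : ∀ j, C j ≤ Mbar)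
    (Cavg : ℕ → ℝ)
    (hCavg : ∀ k, Cavg k = (1 / ((k : ℝ) + 1)) * ∑ j ∈ Finset.range (k + 1), C j)
    (Mseq : ℕ → ℝ) (hM0 : Mseq 0 = γ * M)
    (hMk : ∀ k : ℕ, 1 ≤ k → Mseq k = max (Cavg (k - 1) / α) (γ * M))
    (k : ℕ) (hk : 12 ≤ k) :
    (((Finset.range k).filter (fun i => 0.9 * Mseq i < C i)).card : ℝ) ≤ k / 3 :=
  stmt7_general γ hγ0 α hα Mbar M hMbar hM C hC0 hCM Cavg hCavg Mseq hM0 hMk k hk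
end

section
/- In the AC-ACG setting, for every k ≥ 0 with y_{k+1} ≠ x̃_k and every u ∈ s: ((M_k − F_k)/2)·A_{k+1}·‖y_{k+1} − x̃_k‖² ≤ η_k(u) − η_{k+1}(u) + (m/2)·a_k·D², where F_k := 2·(f(y_{k+1}) − ℓ_f(y_{k+1}; x̃_k))/‖y_{k+1} − x̃_k‖² and η_j(u) := A_j·(φ(y_j) − φ(u)) + (1/2)·‖u − x_j‖². -/
/-!
Write `ℓ` for the model `ℓ_f(·; x̃_k) + h`, which is convex, and
`w := (A_k y_k + a_k x_{k+1}) / A_{k+1}`. Both update rules make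
`ℓ(y_{k+1}) + (M_k/2)‖y_{k+1} - x̃_k‖²` at most the same expression at `w`. Since
`w - x̃_k = (a_k / A_{k+1}) (x_{k+1} - x_k)` and `M_k a_k² = A_{k+1}`, the proximal term at `w`
is `‖x_{k+1} - x_k‖² / (2 A_{k+1})`. Convexity of `ℓ` splits `A_{k+1} ℓ(w)` into
`A_k ℓ(y_k) + a_k ℓ(x_{k+1})`; the three-point inequality of the `1`-strongly convex
`x`-subproblem trades `a_k ℓ(x_{k+1}) + ‖x_{k+1} - x_k‖²/2` for `a_k ℓ(u)` and the change of
`‖u - x‖²/2`; finally the lower curvature bound replaces `ℓ` by `φ` at the cost of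
`(m/2)(A_k ‖y_k - x̃_k‖² + a_k ‖u - x̃_k‖²) ≤ (m/2) a_k D²`.
-/

open Filter Topology

local notation "⟪" x ", " y "⟫" => @inner ℝ _ _ x y

section

variable {E : Type*} [NormedAddCommGroup E] [InnerProductSpace ℝ E] {s : Set E}

noncomputable def linearization (f : E → ℝ) (f' : E → E) (x u : E) : ℝ := f x + ⟪f' x, u - x⟫

noncomputable def potential (φ : E → ℝ) (A : ℝ) (y x u : E) : ℝ :=
  A * (φ y - φ u) + 1 / 2 * ‖u - x‖ ^ 2

theorem Convex.inv_add_smul_add_smul_mem (hs : Convex ℝ s) {x y : E} (hy : y ∈ s) (hx : x ∈ s)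
    {A a : ℝ} (hA : 0 ≤ A) (ha : 0 < a) : (A + a)⁻¹ • (A • y + a • x) ∈ s := by
  convert convex_iff_div.1 hs hy hx hA ha.le (by positivity) using 1
  rw [smul_add, smul_smul, smul_smul, div_eq_inv_mul, div_eq_inv_mul]

theorem convexOn_linearization_add {f h : E → ℝ} (f' : E → E) (hh : ConvexOn ℝ s h) (x : E) :
    ConvexOn ℝ s fun u ↦ linearization f f' x u + h u := by
  have hlin : (fun u ↦ linearization f f' x u)
      = fun u ↦ innerₛₗ ℝ (f' x) u + (f x - ⟪f' x, x⟫) := by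
    funext u
    simp only [linearization, innerₛₗ_apply_apply, inner_sub_right]
    ring
  rw [show (fun u ↦ linearization f f' x u + h u) = (fun u ↦ linearization f f' x u) + h from rfl,
    hlin]
  exact (((innerₛₗ ℝ (f' x)).convexOn hh.1).add_const _).add hh

theorem ConvexOn.strongConvexOn_add_half_sq_norm_sub {g : E → ℝ} (hg : ConvexOn ℝ s g) (x₀ : E) :
    StrongConvexOn s 1 fun x ↦ g x + 1 / 2 * ‖x - x₀‖ ^ 2 := by
  rw [strongConvexOn_iff_convex]
  have hquad : (fun x ↦ g x + 1 / 2 * ‖x - x₀‖ ^ 2 - 1 / 2 * ‖x‖ ^ 2)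
      = g + fun x ↦ (-innerₛₗ ℝ x₀) x + 1 / 2 * ‖x₀‖ ^ 2 := by
    funext x
    simp only [Pi.add_apply, LinearMap.neg_apply, innerₛₗ_apply_apply, norm_sub_sq_real,
      real_inner_comm x₀ x]
    ring
  rw [hquad]
  exact hg.add (((-innerₛₗ ℝ x₀).convexOn hg.1).add_const _)

theorem StrongConvexOn.add_sq_norm_sub_le_of_isMinOn {F : E → ℝ} {m : ℝ} {z w : E}
    (hF : StrongConvexOn s m F) (hz : z ∈ s) (hmin : IsMinOn F s z) (hw : w ∈ s) :
    F z + m / 2 * ‖w - z‖ ^ 2 ≤ F w := by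
  have hstep : ∀ t ∈ Set.Ioo (0 : ℝ) 1, F z + (1 - t) * (m / 2 * ‖w - z‖ ^ 2) ≤ F w := by
    rintro t ⟨ht0, ht1⟩
    have hle := (hmin (hF.1 hz hw (by linarith) ht0.le (by ring))).trans
      (hF.2 hz hw (sub_nonneg.2 ht1.le) ht0.le (by ring))
    rw [smul_eq_mul, smul_eq_mul, norm_sub_rev] at hle
    nlinarith
  have hlim : Tendsto (fun t : ℝ ↦ F z + (1 - t) * (m / 2 * ‖w - z‖ ^ 2)) (𝓝[>] 0)
      (𝓝 (F z + m / 2 * ‖w - z‖ ^ 2)) :=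
    tendsto_nhdsWithin_of_tendsto_nhds (Continuous.tendsto' (by fun_prop) _ _ (by ring))
  exact le_of_tendsto hlim (eventually_of_mem (Ioo_mem_nhdsGT one_pos) hstep)

theorem weighted_norm_sub_convexComb_sq (x y u : E) (t : ℝ) :
    (1 - t) * ‖y - ((1 - t) • y + t • x)‖ ^ 2 + t * ‖u - ((1 - t) • y + t • x)‖ ^ 2
      = t * ((1 - t) * ‖u - y‖ ^ 2 + t * ‖u - x‖ ^ 2) := by
  have h₁ : y - ((1 - t) • y + t • x) = t • ((u - x) - (u - y)) := by module
  have h₂ : u - ((1 - t) • y + t • x) = (1 - t) • (u - y) + t • (u - x) := by module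
  rw [h₁, h₂]
  generalize u - y = p, u - x = q
  rw [norm_smul, mul_pow, norm_sub_sq_real, norm_add_sq_real, norm_smul, norm_smul,
    real_inner_smul_left, real_inner_smul_right, real_inner_comm q]
  simp only [Real.norm_eq_abs, mul_pow, sq_abs]
  ring

theorem weighted_norm_sub_convexComb_sq_le {D t : ℝ}
    (hdiam : ∀ u ∈ s, ∀ u' ∈ s, ‖u - u'‖ ≤ D) {x y u : E} (hx : x ∈ s) (hy : y ∈ s) (hu : u ∈ s)
    (ht₀ : 0 ≤ t) (ht₁ : t ≤ 1) :
    (1 - t) * ‖y - ((1 - t) • y + t • x)‖ ^ 2 + t * ‖u - ((1 - t) • y + t • x)‖ ^ 2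
      ≤ t * D ^ 2 := by
  have ht : 0 ≤ 1 - t := sub_nonneg.2 ht₁
  calc _ = t * ((1 - t) * ‖u - y‖ ^ 2 + t * ‖u - x‖ ^ 2) := weighted_norm_sub_convexComb_sq x y u t
    _ ≤ t * ((1 - t) * D ^ 2 + t * D ^ 2) := by gcongr <;> exact hdiam u hu _ ‹_›
    _ = t * D ^ 2 := by ring

theorem mul_sq_eq_add_of_eq_root {M A a : ℝ} (hM : 0 < M) (hA : 0 ≤ A)
    (ha : a = (1 + √(1 + 4 * M * A)) / (2 * M)) : M * a ^ 2 = A + a := by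
  have hsq := Real.sq_sqrt (by positivity : (0 : ℝ) ≤ 1 + 4 * M * A)
  generalize √(1 + 4 * M * A) = r at hsq ha
  subst ha
  field_simp
  linear_combination hsq

theorem pos_of_eq_root {M A a : ℝ} (hM : 0 < M) (ha : a = (1 + √(1 + 4 * M * A)) / (2 * M)) :
    0 < a :=
  ha ▸ by positivity

theorem potential_descent {f h : E → ℝ} {f' : E → E} {m D : ℝ}
    (hdiam : ∀ u ∈ s, ∀ u' ∈ s, ‖u - u'‖ ≤ D)
    (hlower : ∀ u ∈ s, ∀ u' ∈ s, -(m / 2) * ‖u - u'‖ ^ 2 ≤ f u - f u' - ⟪f' u', u - u'⟫)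
    (hh : ConvexOn ℝ s h) (hm : 0 ≤ m) {A a M : ℝ} (hA : 0 ≤ A) (ha : 0 < a)
    (hMa : M * a ^ 2 = A + a)
    {y₀ x₀ x₁ y₁ xt w u : E} (hy₀ : y₀ ∈ s) (hx₀ : x₀ ∈ s) (hx₁ : x₁ ∈ s) (hu : u ∈ s)
    (hxt : xt = (A + a)⁻¹ • (A • y₀ + a • x₀)) (hw : w = (A + a)⁻¹ • (A • y₀ + a • x₁))
    (hx₁_min : IsMinOn (fun v ↦ a * (linearization f f' xt v + h v) + 1 / 2 * ‖v - x₀‖ ^ 2) s x₁)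
    (hy₁ : linearization f f' xt y₁ + h y₁ + M / 2 * ‖y₁ - xt‖ ^ 2
      ≤ linearization f f' xt w + h w + M / 2 * ‖w - xt‖ ^ 2) :
    (A + a) * (M / 2 * ‖y₁ - xt‖ ^ 2 - (f y₁ - linearization f f' xt y₁))
      ≤ potential (f + h) A y₀ x₀ u - potential (f + h) (A + a) y₁ x₁ u + m / 2 * a * D ^ 2 := by
  set ℓ := fun v ↦ linearization f f' xt v + h v with hℓ
  have hℓconv : ConvexOn ℝ s ℓ := convexOn_linearization_add f' hh xt
  have hA' : 0 < A + a := by positivity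
  have hxt_mem : xt ∈ s := hxt ▸ hh.1.inv_add_smul_add_smul_mem hy₀ hx₀ hA ha
  generalize ht : a / (A + a) = t
  have hAt : (A + a) * t = a := ht ▸ mul_div_cancel₀ a hA'.ne'
  have hAt' : (A + a) * (1 - t) = A := by linear_combination -hAt
  have ht₀ : 0 ≤ t := ht ▸ by positivity
  have ht₁ : 0 ≤ 1 - t := by nlinarith
  have hcomb : ∀ p q : E, (A + a)⁻¹ • (A • p + a • q) = (1 - t) • p + t • q := fun p q ↦ by
    rw [smul_add, smul_smul, smul_smul, (inv_mul_eq_iff_eq_mul₀ hA'.ne').2 hAt'.symm,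
      (inv_mul_eq_iff_eq_mul₀ hA'.ne').2 hAt.symm]
  rw [hcomb] at hxt hw
  have hprox : (A + a) * (M / 2 * ‖w - xt‖ ^ 2) = 1 / 2 * ‖x₁ - x₀‖ ^ 2 := by
    have : w - xt = t • (x₁ - x₀) := by rw [hw, hxt]; module
    rw [this, norm_smul, mul_pow, Real.norm_eq_abs, sq_abs]
    have hMt : (A + a) * M * t ^ 2 = 1 := mul_left_cancel₀ hA'.ne' <| by
      linear_combination hMa + M * ((A + a) * t + a) * hAt
    linear_combination (‖x₁ - x₀‖ ^ 2 / 2) * hMt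
  have hthree : a * ℓ x₁ + 1 / 2 * ‖x₁ - x₀‖ ^ 2 + 1 / 2 * ‖u - x₁‖ ^ 2
      ≤ a * ℓ u + 1 / 2 * ‖u - x₀‖ ^ 2 := by
    simpa using ((hℓconv.smul ha.le).strongConvexOn_add_half_sq_norm_sub x₀)
      |>.add_sq_norm_sub_le_of_isMinOn hx₁ hx₁_min hu
  have hconv : ℓ w ≤ (1 - t) * ℓ y₀ + t * ℓ x₁ := hw ▸ hℓconv.2 hy₀ hx₁ ht₁ ht₀ (by ring)
  have hlow : ∀ v ∈ s, ℓ v ≤ f v + h v + m / 2 * ‖v - xt‖ ^ 2 := fun v hv ↦ by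
    have := hlower v hv xt hxt_mem
    simp only [hℓ, linearization]
    linarith
  have hdist : (1 - t) * ‖y₀ - xt‖ ^ 2 + t * ‖u - xt‖ ^ 2 ≤ t * D ^ 2 :=
    hxt ▸ weighted_norm_sub_convexComb_sq_le hdiam hx₀ hy₀ hu ht₀ (by linarith)
  simp only [potential, Pi.add_apply]
  linear_combination (A + a) * hy₁ + hprox + (A + a) * hconv + hthree + A * hlow y₀ hy₀
    + a * hlow u hu + (m / 2 * (A + a)) * hdist
    + ℓ y₀ * hAt' + ℓ x₁ * hAt - (m / 2 * ‖y₀ - xt‖ ^ 2) * hAt' - (m / 2 * ‖u - xt‖ ^ 2) * hAt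
    + (m / 2 * D ^ 2) * hAt

end

theorem stmt10_general {E : Type*} [NormedAddCommGroup E] [InnerProductSpace ℝ E]
    (s : Set E) (hs : Convex ℝ s)
    (D : ℝ) (hdiam : ∀ u ∈ s, ∀ u' ∈ s, ‖u - u'‖ ≤ D)
    (f : E → ℝ) (f' : E → E)
    (m Mbar : ℝ) (hm : 0 ≤ m) (hMbar : 0 < Mbar)
    (hlower : ∀ u ∈ s, ∀ u' ∈ s,
      -(m / 2) * ‖u - u'‖ ^ 2 ≤ f u - f u' - (inner ℝ (f' u') (u - u') : ℝ))
    (h : E → ℝ) (hh : ConvexOn ℝ s h)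
    (γ M α : ℝ) (hγ0 : 0 < γ) (hMM : Mbar ≤ M)
    (x y yg xt : ℕ → E) (A a Mseq C Cavg : ℕ → ℝ)
    (hx0 : x 0 ∈ s) (hy0 : y 0 = x 0) (hA0 : A 0 = 0) (hM0 : Mseq 0 = γ * M)
    (ha : ∀ k, a k = (1 + Real.sqrt (1 + 4 * Mseq k * A k)) / (2 * Mseq k))
    (hA : ∀ k, A (k + 1) = A k + a k)
    (hxt : ∀ k, xt k = (A (k + 1))⁻¹ • (A k • y k + a k • x k))
    (hyg_mem : ∀ k, yg (k + 1) ∈ s)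
    (hyg_min : ∀ k, ∀ u ∈ s,
      f (xt k) + (inner ℝ (f' (xt k)) (yg (k + 1) - xt k) : ℝ) + h (yg (k + 1))
          + Mseq k / 2 * ‖yg (k + 1) - xt k‖ ^ 2
        ≤ f (xt k) + (inner ℝ (f' (xt k)) (u - xt k) : ℝ) + h u
          + Mseq k / 2 * ‖u - xt k‖ ^ 2)
    (hx_mem : ∀ k, x (k + 1) ∈ s)
    (hx_min : ∀ k, ∀ u ∈ s,
      a k * (f (xt k) + (inner ℝ (f' (xt k)) (x (k + 1) - xt k) : ℝ) + h (x (k + 1)))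
          + 1 / 2 * ‖x (k + 1) - x k‖ ^ 2
        ≤ a k * (f (xt k) + (inner ℝ (f' (xt k)) (u - xt k) : ℝ) + h u)
          + 1 / 2 * ‖u - x k‖ ^ 2)
    (hMsucc : ∀ k, Mseq (k + 1) = max (Cavg k / α) (γ * M))
    (hy : ∀ k, y (k + 1) =
      if 0.9 * Mseq k < C k then (A (k + 1))⁻¹ • (A k • y k + a k • x (k + 1))
      else yg (k + 1))
     :
    ∀ k : ℕ, y (k + 1) ≠ xt k → ∀ u ∈ s,
      (Mseq k -
          2 * (f (y (k + 1)) - (f (xt k) + (inner ℝ (f' (xt k)) (y (k + 1) - xt k) : ℝ)))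
            / ‖y (k + 1) - xt k‖ ^ 2) / 2
          * A (k + 1) * ‖y (k + 1) - xt k‖ ^ 2
        ≤ (A k * ((f (y k) + h (y k)) - (f u + h u)) + 1 / 2 * ‖u - x k‖ ^ 2)
          - (A (k + 1) * ((f (y (k + 1)) + h (y (k + 1))) - (f u + h u))
              + 1 / 2 * ‖u - x (k + 1)‖ ^ 2)
          + m / 2 * a k * D ^ 2 := by
  have hMpos : ∀ k, 0 < Mseq k := by
    have hγM : 0 < γ * M := mul_pos hγ0 (hMbar.trans_le hMM)
    rintro (_ | k)
    · exact hM0 ▸ hγM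
    · exact hMsucc k ▸ hγM.trans_le (le_max_right _ _)
  have hapos : ∀ k, 0 < a k := fun k ↦ pos_of_eq_root (hMpos k) (ha k)
  have hAnn : ∀ k, 0 ≤ A k := fun k ↦ hA0 ▸
    monotone_nat_of_le_succ (fun k ↦ hA k ▸ le_add_of_nonneg_right (hapos k).le) k.zero_le
  have hxs : ∀ k, x k ∈ s := by
    rintro (_ | k)
    exacts [hx0, hx_mem k]
  have hys : ∀ k, y k ∈ s := by
    intro k
    induction k with
    | zero => exact hy0 ▸ hx0
    | succ k ih =>
      rw [hy k, hA k]
      split_ifs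
      exacts [hs.inv_add_smul_add_smul_mem ih (hx_mem k) (hAnn k) (hapos k), hyg_mem k]
  intro k hne u hu
  have hxtk := hxt k
  have hy₁ := hy k
  rw [hA k] at hxtk hy₁ ⊢
  have hw := hs.inv_add_smul_add_smul_mem (hys k) (hx_mem k) (hAnn k) (hapos k)
  have hstep := potential_descent hdiam hlower hh hm (hAnn k) (hapos k)
    (mul_sq_eq_add_of_eq_root (hMpos k) (hAnn k) (ha k)) (hys k) (hxs k) (hx_mem k) hu hxtk rfl
    (isMinOn_iff.2 (hx_min k)) (y₁ := y (k + 1)) (by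
      split_ifs at hy₁
      exacts [hy₁ ▸ le_rfl, hy₁ ▸ hyg_min k _ hw])
  have hN : ‖y (k + 1) - xt k‖ ≠ 0 := norm_ne_zero_iff.2 (sub_ne_zero.2 hne)
  calc _ = (A k + a k) * (Mseq k / 2 * ‖y (k + 1) - xt k‖ ^ 2
        - (f (y (k + 1)) - linearization f f' (xt k) (y (k + 1)))) := by
        unfold linearization
        field_simp
    _ ≤ _ := hstep

/-- Lemma 2: the key recursive potential inequality of AC-ACG. -/
theorem stmt10 {E : Type*} [NormedAddCommGroup E] [InnerProductSpace ℝ E]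
    (s : Set E) (hs : Convex ℝ s) (hsne : s.Nonempty)
    (D : ℝ) (hD : 0 < D) (hdiam : ∀ u ∈ s, ∀ u' ∈ s, ‖u - u'‖ ≤ D)
    (f : E → ℝ) (f' : E → E) (hf : ∀ z : E, HasFDerivAt f ((innerSL ℝ) (f' z)) z)
    (m Mbar : ℝ) (hm : 0 ≤ m) (hMbar : 0 < Mbar)
    (hlower : ∀ u ∈ s, ∀ u' ∈ s,
      -(m / 2) * ‖u - u'‖ ^ 2 ≤ f u - f u' - (inner ℝ (f' u') (u - u') : ℝ))
    (hlip : ∀ u ∈ s, ∀ u' ∈ s, ‖f' u - f' u'‖ ≤ Mbar * ‖u - u'‖)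
    (h : E → ℝ) (hh : ConvexOn ℝ s h)
    (γ M α : ℝ) (hγ0 : 0 < γ) (hγ1 : γ < 1) (hMM : Mbar ≤ M)
    (hα : α = 0.9 / 8 * (1 + 1 / (0.9 * γ))⁻¹)
    (x y yg xt v : ℕ → E) (A a Mseq C Cavg : ℕ → ℝ)
    (hx0 : x 0 ∈ s) (hy0 : y 0 = x 0) (hA0 : A 0 = 0) (hM0 : Mseq 0 = γ * M)
    (ha : ∀ k, a k = (1 + Real.sqrt (1 + 4 * Mseq k * A k)) / (2 * Mseq k))
    (hA : ∀ k, A (k + 1) = A k + a k)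
    (hxt : ∀ k, xt k = (A (k + 1))⁻¹ • (A k • y k + a k • x k))
    (hyg_mem : ∀ k, yg (k + 1) ∈ s)
    (hyg_min : ∀ k, ∀ u ∈ s,
      f (xt k) + (inner ℝ (f' (xt k)) (yg (k + 1) - xt k) : ℝ) + h (yg (k + 1))
          + Mseq k / 2 * ‖yg (k + 1) - xt k‖ ^ 2
        ≤ f (xt k) + (inner ℝ (f' (xt k)) (u - xt k) : ℝ) + h u
          + Mseq k / 2 * ‖u - xt k‖ ^ 2)
    (hx_mem : ∀ k, x (k + 1) ∈ s)
    (hx_min : ∀ k, ∀ u ∈ s,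
      a k * (f (xt k) + (inner ℝ (f' (xt k)) (x (k + 1) - xt k) : ℝ) + h (x (k + 1)))
          + 1 / 2 * ‖x (k + 1) - x k‖ ^ 2
        ≤ a k * (f (xt k) + (inner ℝ (f' (xt k)) (u - xt k) : ℝ) + h u)
          + 1 / 2 * ‖u - x k‖ ^ 2)
    (hv : ∀ k, v (k + 1) = Mseq k • (xt k - yg (k + 1)) + f' (yg (k + 1)) - f' (xt k))
    (hne : ∀ k, yg (k + 1) ≠ xt k)
    (hC : ∀ k, C k = max
      (2 * (f (yg (k + 1)) - (f (xt k) + (inner ℝ (f' (xt k)) (yg (k + 1) - xt k) : ℝ)))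
        / ‖yg (k + 1) - xt k‖ ^ 2)
      (‖f' (yg (k + 1)) - f' (xt k)‖ / ‖yg (k + 1) - xt k‖))
    (hCavg : ∀ k, Cavg k = (1 / ((k : ℝ) + 1)) * ∑ j ∈ Finset.range (k + 1), C j)
    (hMsucc : ∀ k, Mseq (k + 1) = max (Cavg k / α) (γ * M))
    (hy : ∀ k, y (k + 1) =
      if 0.9 * Mseq k < C k then (A (k + 1))⁻¹ • (A k • y k + a k • x (k + 1))
      else yg (k + 1))
     :
    ∀ k : ℕ, y (k + 1) ≠ xt k → ∀ u ∈ s,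
      (Mseq k -
          2 * (f (y (k + 1)) - (f (xt k) + (inner ℝ (f' (xt k)) (y (k + 1) - xt k) : ℝ)))
            / ‖y (k + 1) - xt k‖ ^ 2) / 2
          * A (k + 1) * ‖y (k + 1) - xt k‖ ^ 2
        ≤ (A k * ((f (y k) + h (y k)) - (f u + h u)) + 1 / 2 * ‖u - x k‖ ^ 2)
          - (A (k + 1) * ((f (y (k + 1)) + h (y (k + 1))) - (f u + h u))
              + 1 / 2 * ‖u - x (k + 1)‖ ^ 2)
          + m / 2 * a k * D ^ 2 :=
  stmt10_general s hs D hdiam f f' m Mbar hm hMbar hlower h hh γ M α hγ0 hMM x y yg xt A a Mseq C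
    Cavg hx0 hy0 hA0 hM0 ha hA hxt hyg_mem hyg_min hx_mem hx_min hMsucc hy
end
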